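/- Let F ∈ ℂ, k ∈ ℤ∖{0}, a ∈ ℂ∖{0}, m ∈ ℂ, and let b ∈ ℂ satisfy kb = 1. On V define linear operators 𝕃_n, 𝕀_n by 𝕃_n(v_t) = (t+n)v_{n+t} for all t, 𝕀_n(v_t) = 0 for t ≠ 0, 𝕀_n(v_0) = nF·v_n, and define the linear map φ by φ(v_t) = aᵗ·m·v_{kt}. Then for all n ∈ ℤ: φ ∘ 𝕃_n = (1/k)aⁿ·𝕃_{kn} ∘ φ and φ ∘ 𝕀_n = aⁿb·𝕀_{kn} ∘ φ; consequently (φ∘𝕃_n)(v_t) = (t+n)·a^{n+t}·m·v_{k(n+t)} for all t, (φ∘𝕀_n)(v_t) = 0 for t ≠ 0, and (φ∘𝕀_n)(v_0) = nF·aⁿ·m·v_{kn}. -/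

import Mathlib

/-!
Both intertwining identities are checked on the basis vectors `v t`, where each side is a multiple
of `v (k * (n + t))`. For `𝕃` the prefactor `1/k` cancels the `k` in `𝕃 (k n) (v (k t)) =
k (t + n) v (k (n + t))`; for `𝕀` the prefactor `b = 1/k` cancels the `k` in `(k n) F`, and both
sides vanish for `t ≠ 0` because then `k t ≠ 0`.
-/

/-- The ℂ-vector space with basis `{v t : t ∈ ℤ}` (finitely supported functions ℤ → ℂ). -/
abbrev V : Type := ℤ →₀ ℂ

/-- The basis vector `v t`. -/
noncomputable def v (t : ℤ) : V := Finsupp.single t 1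

/-- The linear operator on `V` determined by its values on the basis vectors. -/
noncomputable def op (f : ℤ → V) : V →ₗ[ℂ] V := Finsupp.lift V ℂ ℤ f

/-- The operator `𝕃 n` of the module `V_F`: `𝕃 n (v t) = (t+n) v (n+t)` for all `t`. -/
noncomputable def Lop (n : ℤ) : V →ₗ[ℂ] V :=
  op fun t => ((t : ℂ) + n) • v (n + t)

/-- The operator `𝕀 n` of the module `V_F`:
`𝕀 n (v t) = 0` for `t ≠ 0`, `𝕀 n (v 0) = nF • v n`. -/
noncomputable def Iop (F : ℂ) (n : ℤ) : V →ₗ[ℂ] V :=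
  op fun t => if t = 0 then ((n : ℂ) * F) • v n else 0

/-- The twisting linear map `φ (v t) = aᵗ m • v (kt)`. -/
noncomputable def φmap (a m : ℂ) (k : ℤ) : V →ₗ[ℂ] V :=
  op fun t => (a ^ t * m) • v (k * t)

theorem linearMap_ext_v {f g : V →ₗ[ℂ] V} (h : ∀ t, f (v t) = g (v t)) : f = g :=
  Finsupp.basisSingleOne.ext fun t => by
    rw [Finsupp.coe_basisSingleOne]; exact h t

@[simp]
theorem op_v (f : ℤ → V) (t : ℤ) : op f (v t) = f t := by
  rw [op, v, Finsupp.lift_apply, Finsupp.sum_single_index (zero_smul ℂ (f t)), one_smul]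

theorem Lop_v (n t : ℤ) : Lop n (v t) = ((t : ℂ) + n) • v (n + t) := op_v _ t

theorem Iop_v_zero (F : ℂ) (n : ℤ) : Iop F n (v 0) = ((n : ℂ) * F) • v n := by
  simp [Iop]

theorem Iop_v_of_ne_zero (F : ℂ) (n : ℤ) {t : ℤ} (ht : t ≠ 0) : Iop F n (v t) = 0 := by
  simp [Iop, ht]

theorem φmap_v (a m : ℂ) (k t : ℤ) : φmap a m k (v t) = (a ^ t * m) • v (k * t) := op_v _ t

theorem φmap_Lop_v {a : ℂ} (ha : a ≠ 0) (m : ℂ) (k n t : ℤ) :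
    φmap a m k (Lop n (v t)) = (((t : ℂ) + n) * a ^ (n + t) * m) • v (k * (n + t)) := by
  rw [Lop_v, map_smul, φmap_v, smul_smul, zpow_add₀ ha]
  congr 1
  ring

theorem φmap_Iop_v_zero (F a m : ℂ) (k n : ℤ) :
    φmap a m k (Iop F n (v 0)) = ((n : ℂ) * F * a ^ n * m) • v (k * n) := by
  rw [Iop_v_zero, map_smul, φmap_v, smul_smul]
  congr 1
  ring

theorem φmap_Iop_v_of_ne_zero (F a m : ℂ) (k n : ℤ) {t : ℤ} (ht : t ≠ 0) :
    φmap a m k (Iop F n (v t)) = 0 := by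
  rw [Iop_v_of_ne_zero F n ht, map_zero]

theorem φmap_comp_Lop {k : ℤ} (hk : k ≠ 0) {a : ℂ} (ha : a ≠ 0) (m : ℂ) (n : ℤ) :
    φmap a m k ∘ₗ Lop n = ((1 / (k : ℂ) * a ^ n) • Lop (k * n)) ∘ₗ φmap a m k := by
  refine linearMap_ext_v fun t => ?_
  have hkC : (k : ℂ) ≠ 0 := Int.cast_ne_zero.mpr hk
  rw [LinearMap.comp_apply, φmap_Lop_v ha, LinearMap.comp_apply, φmap_v, LinearMap.smul_apply,
    map_smul, Lop_v, smul_smul, smul_smul, ← mul_add, zpow_add₀ ha]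
  push_cast
  congr 1
  field_simp

theorem φmap_comp_Iop (F a m : ℂ) {k : ℤ} {b : ℂ} (hb : (k : ℂ) * b = 1) (n : ℤ) :
    φmap a m k ∘ₗ Iop F n = ((a ^ n * b) • Iop F (k * n)) ∘ₗ φmap a m k := by
  refine linearMap_ext_v fun t => ?_
  rw [LinearMap.comp_apply, LinearMap.comp_apply, φmap_v, LinearMap.smul_apply, map_smul]
  rcases eq_or_ne t 0 with rfl | ht
  · rw [φmap_Iop_v_zero, zpow_zero, one_mul, mul_zero, Iop_v_zero, smul_smul, smul_smul]
    congr 1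
    push_cast
    linear_combination (-(a ^ n * n * F * m)) * hb
  · have hk : k ≠ 0 := by exact_mod_cast left_ne_zero_of_mul_eq_one hb
    rw [φmap_Iop_v_of_ne_zero F a m k n ht, Iop_v_of_ne_zero F _ (mul_ne_zero hk ht),
      smul_zero, smul_zero]

theorem V_F_intertwine (F : ℂ) (k : ℤ) (hk : k ≠ 0) (a : ℂ) (ha : a ≠ 0)
    (m b : ℂ) (hb : (k : ℂ) * b = 1) :
    (∀ n : ℤ, φmap a m k ∘ₗ Lop n
        = ((1 / (k : ℂ) * a ^ n) • Lop (k * n)) ∘ₗ φmap a m k) ∧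
    (∀ n : ℤ, φmap a m k ∘ₗ Iop F n = ((a ^ n * b) • Iop F (k * n)) ∘ₗ φmap a m k) ∧
    (∀ n t : ℤ, φmap a m k (Lop n (v t))
        = (((t : ℂ) + n) * a ^ (n + t) * m) • v (k * (n + t))) ∧
    (∀ n t : ℤ, t ≠ 0 → φmap a m k (Iop F n (v t)) = 0) ∧
    (∀ n : ℤ, φmap a m k (Iop F n (v 0)) = ((n : ℂ) * F * a ^ n * m) • v (k * n)) :=
  ⟨φmap_comp_Lop hk ha m, φmap_comp_Iop F a m hb, φmap_Lop_v ha m k,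
    fun n _ ht => φmap_Iop_v_of_ne_zero F a m k n ht, φmap_Iop_v_zero F a m k⟩
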